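/- Let f : ℝ^n → ℝ be continuously differentiable with gradient ∇f Lipschitz continuous with constant L ≥ 0. Let z⁺, z ∈ ℝ^n and write Δ = z⁺ − z. Suppose c ∈ [0,1] is such that for every τ ∈ [0,1], |⟨∇f(z + τΔ) − ∇f(z), Δ⟩| ≤ c · ‖∇f(z + τΔ) − ∇f(z)‖ · ‖Δ‖ (i.e., c is the cosine of the minimal angle γ between the vectors ∇f(z + τΔ) − ∇f(z) and Δ, assumed nonzero). Then |f(z⁺) − f(z) − ⟨∇f(z), Δ⟩| ≤ (L/2) · c · ‖Δ‖². -/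

import Mathlib

open RealInnerProductSpace

/-- **Revisited remainder error bound.**
Let `f : ℝ^n → ℝ` be continuously differentiable with gradient `∇f` Lipschitz continuous
with constant `L ≥ 0`. Let `z⁺, z ∈ ℝ^n` and write `Δ = z⁺ − z`. Suppose `c ∈ [0,1]` is such
that for every `τ ∈ [0,1]`,
`|⟨∇f(z + τΔ) − ∇f(z), Δ⟩| ≤ c·‖∇f(z + τΔ) − ∇f(z)‖·‖Δ‖`
(i.e. `c = |cos γ|` for the minimal angle `γ` between the two vectors). Then
`|f(z⁺) − f(z) − ⟨∇f(z), Δ⟩| ≤ (L/2)·c·‖Δ‖²`. -/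
theorem revisited_remainder_error_bound
    (n : ℕ) (f : EuclideanSpace ℝ (Fin n) → ℝ) (hf : ContDiff ℝ 1 f)
    (L : ℝ) (hL : 0 ≤ L)
    (hLip : ∀ x y, ‖gradient f x - gradient f y‖ ≤ L * ‖x - y‖)
    (zp z : EuclideanSpace ℝ (Fin n)) (c : ℝ) (hc : c ∈ Set.Icc (0 : ℝ) 1)
    (hcos : ∀ τ ∈ Set.Icc (0 : ℝ) 1,
      |⟪gradient f (z + τ • (zp - z)) - gradient f z, zp - z⟫| ≤
        c * ‖gradient f (z + τ • (zp - z)) - gradient f z‖ * ‖zp - z‖) :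
    |f zp - f z - ⟪gradient f z, zp - z⟫| ≤ L / 2 * c * ‖zp - z‖ ^ 2 := by
  have hdiff : Differentiable ℝ f := hf.differentiable one_ne_zero
  set Δ := zp - z with hΔ
  have hgradcont : Continuous (gradient f) := by
    have h1 : Continuous (fderiv ℝ f) := hf.continuous_fderiv one_ne_zero
    have h2 : gradient f = fun x =>
        (InnerProductSpace.toDual ℝ (EuclideanSpace ℝ (Fin n))).symm (fderiv ℝ f x) := rfl
    rw [h2]
    exact (InnerProductSpace.toDual ℝ _).symm.continuous.comp h1
  have hcurve : Continuous fun τ : ℝ => z + τ • Δ := by continuity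
  have hg : ∀ τ : ℝ, HasDerivAt (fun t : ℝ => f (z + t • Δ))
      ⟪gradient f (z + τ • Δ), Δ⟫ τ := by
    intro τ
    have hc1 : HasDerivAt (fun t : ℝ => z + t • Δ) Δ τ := by
      simpa using ((hasDerivAt_id τ).smul_const Δ).const_add z
    have hF : HasGradientAt f (gradient f (z + τ • Δ)) (z + τ • Δ) :=
      (hdiff (z + τ • Δ)).hasGradientAt
    have := hF.hasFDerivAt.comp_hasDerivAt τ hc1
    have h3 : HasDerivAt (fun t : ℝ => f (z + t • Δ))
        ((InnerProductSpace.toDual ℝ _ (gradient f (z + τ • Δ))) Δ) τ := this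
    simpa [InnerProductSpace.toDual_apply_apply] using h3
  have hcont : Continuous fun τ : ℝ => ⟪gradient f (z + τ • Δ), Δ⟫ :=
    (hgradcont.comp hcurve).inner continuous_const
  have hint : ∫ τ in (0:ℝ)..1, ⟪gradient f (z + τ • Δ), Δ⟫ = f zp - f z := by
    have := intervalIntegral.integral_eq_sub_of_hasDerivAt
      (f := fun t : ℝ => f (z + t • Δ))
      (fun τ _ => hg τ) (hcont.intervalIntegrable 0 1)
    simpa [hΔ] using this
  have key : f zp - f z - ⟪gradient f z, Δ⟫ =
      ∫ τ in (0:ℝ)..1, ⟪gradient f (z + τ • Δ) - gradient f z, Δ⟫ := by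
    have : ∀ τ : ℝ, ⟪gradient f (z + τ • Δ) - gradient f z, Δ⟫ =
        ⟪gradient f (z + τ • Δ), Δ⟫ - ⟪gradient f z, Δ⟫ := fun τ => inner_sub_left _ _ _
    rw [intervalIntegral.integral_congr (fun τ _ => this τ),
      intervalIntegral.integral_sub (hcont.intervalIntegrable 0 1)
        (intervalIntegrable_const), hint]
    simp
  rw [key]
  have hbound : ∀ τ ∈ Set.Icc (0:ℝ) 1,
      |⟪gradient f (z + τ • Δ) - gradient f z, Δ⟫| ≤ c * L * ‖Δ‖ ^ 2 * τ := by
    intro τ hτ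
    refine (hcos τ hτ).trans ?_
    have hlip : ‖gradient f (z + τ • Δ) - gradient f z‖ ≤ L * (τ * ‖Δ‖) := by
      have := hLip (z + τ • Δ) z
      simpa [norm_smul, abs_of_nonneg hτ.1] using this
    have hc0 : 0 ≤ c := hc.1
    have h1 : c * ‖gradient f (z + τ • Δ) - gradient f z‖ * ‖Δ‖ ≤
        c * (L * (τ * ‖Δ‖)) * ‖Δ‖ := by
      have := mul_le_mul_of_nonneg_left hlip hc0
      exact mul_le_mul_of_nonneg_right this (norm_nonneg _)
    refine h1.trans_eq ?_
    ring
  have habs : |∫ τ in (0:ℝ)..1, ⟪gradient f (z + τ • Δ) - gradient f z, Δ⟫| ≤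
      ∫ τ in (0:ℝ)..1, c * L * ‖Δ‖ ^ 2 * τ := by
    refine intervalIntegral.abs_integral_le_integral_abs (by norm_num) |>.trans ?_
    refine intervalIntegral.integral_mono_on (by norm_num) ?_ ?_ ?_
    · exact (((hgradcont.comp hcurve).sub continuous_const).inner
        continuous_const).abs.intervalIntegrable 0 1
    · exact (continuous_const.mul continuous_id).intervalIntegrable 0 1
    · exact hbound
  refine habs.trans ?_
  have : ∫ τ in (0:ℝ)..1, c * L * ‖Δ‖ ^ 2 * τ = c * L * ‖Δ‖ ^ 2 * (1 / 2) := by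
    rw [intervalIntegral.integral_const_mul]
    simp [integral_id]
  rw [this]
  ring_nf
  linarith [sq_nonneg ‖Δ‖, mul_nonneg (mul_nonneg hc.1 hL) (sq_nonneg ‖Δ‖)]
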